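/- Let L be a list of positive natural numbers, let n be the sum of L and m its length. Then Π_{k ∈ L} h(k) ≥ (2 + √2)^n · (2 − √2)^m, as real numbers. -/

import Mathlib

/-!
Splitting off the first block of a composition gives `h(n+1) = Σ_{p ≤ n} (n + 2 - p) h(p)`, and
taking second differences yields `h(n+3) = 4 h(n+2) - 2 h(n+1)`, with characteristic roots `2 ± √2`.
Since `(2 + √2)(2 - √2) = 2`, the ratio bound `h(k+1) ≥ (2 + √2) h(k)` propagates along this
recurrence from `h(2) = 7 ≥ (2 + √2) h(1)`. Hence `h(k) ≥ 2 (2 + √2)^(k-1) = (2 + √2)^k (2 - √2)`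
for `k ≥ 1`, and the claim is the product of these bounds over the list.
-/

/-- `hcomp k` is the sum over all compositions `c` of `k` of `∏_{p ∈ c.blocks} (p + 1)`;
in particular `hcomp 0 = 1`. -/
def hcomp (k : ℕ) : ℕ := ∑ c : Composition k, (c.blocks.map (· + 1)).prod

theorem Composition.blocks_eq_cons_tail {n : ℕ} (c : Composition (n + 1)) :
    c.blocks = (n + 1 - c.blocks.tail.sum) :: c.blocks.tail := by
  obtain ⟨a, t, hb⟩ := List.exists_cons_of_ne_nil (c.blocks_eq_nil.not.2 n.succ_ne_zero)
  have hsum := c.blocks_sum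
  have ha := c.blocks_pos (hb ▸ List.mem_cons_self)
  simp only [hb, List.sum_cons, List.tail_cons, List.cons.injEq, and_true] at hsum ⊢
  omega

theorem Composition.sum_tail_lt {n : ℕ} (c : Composition (n + 1)) :
    c.blocks.tail.sum < n + 1 := by
  have := c.blocks_pos (by rw [c.blocks_eq_cons_tail]; exact List.mem_cons_self)
  omega

def Composition.firstBlockEquiv (n : ℕ) :
    Composition (n + 1) ≃ Σ p : Fin (n + 1), Composition p where
  toFun c := ⟨⟨c.blocks.tail.sum, c.sum_tail_lt⟩,
    ⟨c.blocks.tail, fun h => c.blocks_pos (List.mem_of_mem_tail h), rfl⟩⟩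
  invFun x := ⟨(n + 1 - x.1) :: x.2.blocks,
    fun h => (List.mem_cons.1 h).elim (fun h => by omega) x.2.blocks_pos,
    by rw [List.sum_cons, x.2.blocks_sum]; omega⟩
  left_inv c := Composition.ext c.blocks_eq_cons_tail.symm
  right_inv := by
    rintro ⟨⟨p, hp⟩, ⟨blocks, pos, hsum⟩⟩
    obtain rfl : blocks.sum = p := hsum
    rfl

theorem Composition.sum_prod_map_blocks_succ {M : Type*} [CommSemiring M] (f : ℕ → M) (n : ℕ) :
    ∑ c : Composition (n + 1), (c.blocks.map f).prod =
      ∑ p ∈ Finset.range (n + 1), f (n + 1 - p) * ∑ c : Composition p, (c.blocks.map f).prod := by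
  rw [← (Composition.firstBlockEquiv n).symm.sum_comp, Fintype.sum_sigma,
    ← Fin.sum_univ_eq_sum_range]
  simp only [Finset.mul_sum]
  rfl

theorem hcomp_zero : hcomp 0 = 1 := by
  have : Subsingleton (Composition 0) :=
    ⟨fun c d => Composition.ext (by rw [c.blocks_eq_nil.2 rfl, d.blocks_eq_nil.2 rfl])⟩
  rw [hcomp, Fintype.sum_subsingleton _ (Composition.ones 0)]
  rfl

theorem hcomp_succ (n : ℕ) :
    hcomp (n + 1) = ∑ p ∈ Finset.range (n + 1), (n + 1 - p + 1) * hcomp p :=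
  Composition.sum_prod_map_blocks_succ (· + 1) n

theorem hcomp_one : hcomp 1 = 2 := by
  simp [hcomp_succ, hcomp_zero]

theorem hcomp_two : hcomp 2 = 7 := by
  simp [hcomp_succ, Finset.sum_range_succ, hcomp_zero]

theorem hcomp_add_two (n : ℕ) :
    hcomp (n + 2) = 3 * hcomp (n + 1) + ∑ p ∈ Finset.range (n + 1), hcomp p := by
  have hshift : ∑ p ∈ Finset.range (n + 1), (n + 1 + 1 - p + 1) * hcomp p =
      hcomp (n + 1) + ∑ p ∈ Finset.range (n + 1), hcomp p := by
    rw [hcomp_succ n, ← Finset.sum_add_distrib]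
    refine Finset.sum_congr rfl fun p hp => ?_
    rw [Finset.mem_range] at hp
    rw [show n + 1 + 1 - p + 1 = n + 1 - p + 1 + 1 by omega, add_one_mul]
  rw [hcomp_succ (n + 1), Finset.sum_range_succ, hshift, show n + 1 + 1 - (n + 1) + 1 = 2 by omega]
  ring

theorem hcomp_add_three (n : ℕ) : hcomp (n + 3) + 2 * hcomp (n + 1) = 4 * hcomp (n + 2) := by
  have h3 := hcomp_add_two (n + 1)
  have h2 := hcomp_add_two n
  rw [Finset.sum_range_succ, show n + 1 + 1 = n + 2 from rfl,
    show n + 1 + 2 = n + 3 from rfl] at h3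
  omega

theorem Real.sqrt_two_lt_two : √2 < 2 :=
  (Real.sqrt_lt' two_pos).2 (by norm_num)

theorem two_add_sqrt_two_mul_le_succ_of_recurrence {u : ℕ → ℝ}
    (hrec : ∀ n, u (n + 2) + 2 * u n = 4 * u (n + 1)) (h0 : (2 + √2) * u 0 ≤ u 1) (n : ℕ) :
    (2 + √2) * u n ≤ u (n + 1) := by
  induction n with
  | zero => exact h0
  | succ n ih =>
    have hconj : (2 - √2) * (2 + √2) = 2 := by
      ring_nf
      norm_num
    have h := mul_le_mul_of_nonneg_left ih (sub_nonneg.2 Real.sqrt_two_lt_two.le)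
    rw [← mul_assoc, hconj] at h
    linarith [hrec n]

theorem two_add_sqrt_two_mul_hcomp_le {k : ℕ} (hk : 0 < k) :
    (2 + √2) * hcomp k ≤ hcomp (k + 1) := by
  obtain ⟨n, rfl⟩ := Nat.exists_eq_add_one.2 hk
  have hrec (n : ℕ) : (hcomp (n + 3) : ℝ) + 2 * hcomp (n + 1) = 4 * hcomp (n + 2) := by
    exact_mod_cast hcomp_add_three n
  refine two_add_sqrt_two_mul_le_succ_of_recurrence (u := fun n => (hcomp (n + 1) : ℝ)) hrec ?_ n
  show (2 + √2) * (hcomp 1 : ℝ) ≤ hcomp 2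
  rw [hcomp_one, hcomp_two]
  push_cast
  nlinarith [Real.sq_sqrt (zero_le_two : (0 : ℝ) ≤ 2), Real.sqrt_nonneg 2]

theorem pow_mul_le_hcomp {k : ℕ} (hk : 0 < k) : (2 + √2) ^ k * (2 - √2) ≤ hcomp k := by
  induction k, hk using Nat.le_induction with
  | base =>
    rw [hcomp_one]
    ring_nf
    norm_num
  | succ k hk ih =>
    calc (2 + √2) ^ (k + 1) * (2 - √2) = (2 + √2) * ((2 + √2) ^ k * (2 - √2)) := by ring
      _ ≤ (2 + √2) * hcomp k := by gcongr
      _ ≤ hcomp (k + 1) := two_add_sqrt_two_mul_hcomp_le hk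

theorem List.prod_map_pow_mul {M : Type*} [CommMonoid M] (L : List ℕ) (a b : M) :
    (L.map fun k => a ^ k * b).prod = a ^ L.sum * b ^ L.length := by
  induction L with
  | nil => simp
  | cons k L ih =>
    rw [List.map_cons, List.prod_cons, ih, List.sum_cons, List.length_cons, pow_add, pow_succ,
      mul_mul_mul_comm, mul_comm b]

/-- For a list `L` of positive naturals with sum `n` and length `m`,
`∏_{k ∈ L} hcomp k ≥ (2 + √2)^n · (2 − √2)^m`. -/
theorem stmt_16 (L : List ℕ) (hL : ∀ x ∈ L, 0 < x) :
    ((L.map hcomp).prod : ℝ) ≥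
      (2 + Real.sqrt 2) ^ L.sum * (2 - Real.sqrt 2) ^ L.length := by
  have hβ : 0 ≤ 2 - √2 := sub_nonneg.2 Real.sqrt_two_lt_two.le
  rw [ge_iff_le, ← List.prod_map_pow_mul, Nat.cast_list_prod, List.map_map]
  exact List.prod_map_le_prod_map₀ _ _ (fun k _ => by positivity)
    fun k hk => pow_mul_le_hcomp (hL k hk)
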